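/- arXiv:1307.3375 — 5 statements merged into one kernel-verified Lean document; each statement's English description precedes it below -/
import Mathlib

section
/- If Y^d follows an exponential law with parameter \lambda, then E[X^r] = E[Y^s] + P_d/\lambda, where X^r = min(D_{B(Y^s)}, Y^s + Y^d) and P_d = P(D_{B(Y^s)} \geq Y^s + Y^d). -/
/-!
Let `T = D_{B(Y^s)} - Y^s` be the overshoot of the renewal sequence over `Y^s`. Identically
distributed positive `C_i` cannot tend to `0` (`P(C_n ≤ ε) = P(C_0 ≤ ε)` is small), so the `D_n`
are a.s. unbounded, `B(Y^s)` is attained and `T ≥ 0`; hence `X^r = Y^s + min(T, Y^d)`.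
For `Y ~ Exp(λ)` the tail `P(Y > s)` is the density divided by `λ`, so
`E[min(t, Y)] = ∫_0^t P(Y > s) ds = P(Y ≤ t)/λ`. As `T` is a function of `(Y^s, (C_i))`, it is
independent of `Y^d`, and integrating over the law of `T` gives `E[min(T, Y^d)] = P(Y^d ≤ T)/λ`.
-/
open MeasureTheory ProbabilityTheory Filter Set
open scoped ENNReal Topology

lemma measurable_sInf_setOf_mem {α : Type*} [MeasurableSpace α] {s : ℕ → Set α}
    (hs : ∀ n, MeasurableSet (s n)) : Measurable fun x => sInf {n | x ∈ s n} := by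
  refine measurable_of_Iic fun n => ?_
  have hpre : (fun x => sInf {m | x ∈ s m}) ⁻¹' Iic n = (⋃ m ≤ n, s m) ∪ ⋂ m, (s m)ᶜ := by
    ext x
    simp only [mem_preimage, mem_Iic, mem_union, mem_iUnion, mem_iInter, mem_compl_iff,
      exists_prop]
    constructor
    · intro h
      by_cases hx : ∃ m, x ∈ s m
      · exact Or.inl ⟨_, h, Nat.sInf_mem hx⟩
      · exact Or.inr (not_exists.1 hx)
    · rintro (⟨m, hmn, hm⟩ | h)
      · exact (Nat.sInf_le hm).trans hmn
      · simp [h]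
  rw [hpre]
  exact (MeasurableSet.biUnion (to_countable _) fun m _ => hs m).union
    (MeasurableSet.iInter fun m => (hs m).compl)

/-- Junk value `0` when the partial sums never reach `t`. -/
noncomputable def firstPassage (c : ℕ → ℝ) (t : ℝ) : ℕ :=
  sInf {n | 1 ≤ n ∧ t ≤ ∑ i ∈ Finset.range n, c i}

noncomputable def overshoot (c : ℕ → ℝ) (t : ℝ) : ℝ :=
  ∑ i ∈ Finset.range (firstPassage c t), c i - t

lemma overshoot_nonneg {c : ℕ → ℝ} {t : ℝ} (h : ∃ n, 1 ≤ n ∧ t ≤ ∑ i ∈ Finset.range n, c i) :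
    0 ≤ overshoot c t :=
  sub_nonneg.2 (Nat.sInf_mem h).2

lemma measurable_sum_range (n : ℕ) : Measurable fun c : ℕ → ℝ => ∑ i ∈ Finset.range n, c i :=
  Finset.measurable_sum _ fun i _ => measurable_pi_apply i

lemma measurable_firstPassage : Measurable fun p : ℝ × (ℕ → ℝ) => firstPassage p.2 p.1 :=
  measurable_sInf_setOf_mem fun n => (MeasurableSet.const _).inter <|
    measurableSet_le measurable_fst ((measurable_sum_range n).comp measurable_snd)

lemma measurable_overshoot : Measurable fun p : ℝ × (ℕ → ℝ) => overshoot p.2 p.1 := by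
  have hsum : Measurable fun q : (ℕ → ℝ) × ℕ => ∑ i ∈ Finset.range q.2, q.1 i :=
    measurable_from_prod_countable_left measurable_sum_range
  exact (hsum.comp (measurable_snd.prodMk measurable_firstPassage)).sub measurable_fst

section IdentDistrib

variable {Ω : Type*} [MeasurableSpace Ω] {μ : Measure Ω} {X : ℕ → Ω → ℝ}

lemma measure_eventually_le_le_of_identDistrib (hX : ∀ n, IdentDistrib (X n) (X 0) μ μ)
    (ε : ℝ) : μ {ω | ∀ᶠ n in atTop, X n ω ≤ ε} ≤ μ {ω | X 0 ω ≤ ε} := by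
  have hunion : {ω | ∀ᶠ n in atTop, X n ω ≤ ε} = ⋃ N, ⋂ n ≥ N, {ω | X n ω ≤ ε} := by
    ext ω; simp [eventually_atTop]
  have hmono : Monotone fun N => ⋂ n ≥ N, {ω | X n ω ≤ ε} := fun N M hNM =>
    biInter_mono (fun n hn => hNM.trans hn) fun _ _ => subset_rfl
  rw [hunion, hmono.measure_iUnion]
  refine iSup_le fun N => ?_
  calc μ (⋂ n ≥ N, {ω | X n ω ≤ ε}) ≤ μ {ω | X N ω ≤ ε} :=
        measure_mono (iInter₂_subset N le_rfl)
    _ = μ {ω | X 0 ω ≤ ε} := (hX N).measure_mem_eq measurableSet_Iic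

lemma ae_not_tendsto_zero_of_identDistrib [IsFiniteMeasure μ]
    (hX : ∀ n, IdentDistrib (X n) (X 0) μ μ) (hpos : ∀ᵐ ω ∂μ, 0 < X 0 ω) :
    ∀ᵐ ω ∂μ, ¬ Tendsto (fun n => X n ω) atTop (𝓝 0) := by
  set ε : ℕ → ℝ := fun k => 1 / (k + 1)
  have hε : ∀ k, 0 < ε k := fun k => Nat.one_div_pos_of_nat
  have hlim : Tendsto (fun k => μ {ω | X 0 ω ≤ ε k}) atTop (𝓝 0) := by
    have hinter : μ (⋂ k, {ω | X 0 ω ≤ ε k}) = 0 := by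
      refine measure_mono_null (fun ω hω => ?_) (ae_iff.1 hpos)
      exact not_lt.2 (ge_of_tendsto' tendsto_one_div_add_atTop_nhds_zero_nat (mem_iInter.1 hω))
    rw [← hinter]
    exact tendsto_measure_iInter_atTop
      (fun k => (hX 0).aemeasurable_fst.nullMeasurable measurableSet_Iic)
      (fun k l hkl ω (hω : X 0 ω ≤ ε l) => show X 0 ω ≤ ε k from
        hω.trans (Nat.one_div_le_one_div hkl)) ⟨0, measure_ne_top _ _⟩
  refine ae_iff.2 (le_antisymm (ge_of_tendsto' hlim fun k => ?_) zero_le)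
  calc μ {ω | ¬¬Tendsto (fun n => X n ω) atTop (𝓝 0)}
      ≤ μ {ω | ∀ᶠ n in atTop, X n ω ≤ ε k} :=
        measure_mono fun ω hω => (not_not.1 hω).eventually (ge_mem_nhds (hε k))
    _ ≤ μ {ω | X 0 ω ≤ ε k} := measure_eventually_le_le_of_identDistrib hX (ε k)

lemma ae_tendsto_sum_range_atTop_of_identDistrib [IsFiniteMeasure μ]
    (hX : ∀ n, IdentDistrib (X n) (X 0) μ μ) (hpos : ∀ n, ∀ᵐ ω ∂μ, 0 < X n ω) :
    ∀ᵐ ω ∂μ, Tendsto (fun n => ∑ i ∈ Finset.range n, X i ω) atTop atTop := by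
  filter_upwards [ae_not_tendsto_zero_of_identDistrib hX (hpos 0), ae_all_iff.2 hpos]
    with ω hω hωpos
  exact (not_summable_iff_tendsto_nat_atTop_of_nonneg fun n => (hωpos n).le).1
    fun hsum => hω hsum.tendsto_atTop_zero

end IdentDistrib

section Exponential

variable {lam : ℝ}

lemma expMeasure_apply {s : Set ℝ} (hs : MeasurableSet s) :
    expMeasure lam s = ∫⁻ x in s, exponentialPDF lam x := by
  rw [expMeasure, gammaMeasure, withDensity_apply _ hs]
  rfl

lemma expMeasure_Iio_zero : expMeasure lam (Iio 0) = 0 := by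
  rw [expMeasure_apply measurableSet_Iio]
  exact lintegral_exponentialPDF_of_nonpos le_rfl

lemma ae_nonneg_expMeasure : ∀ᵐ y ∂expMeasure lam, 0 ≤ y :=
  ae_iff.2 (measure_mono_null (fun y hy => (not_le.1 hy : y ∈ Iio 0)) expMeasure_Iio_zero)

lemma expMeasure_Ioi (hlam : 0 < lam) {s : ℝ} (hs : 0 ≤ s) :
    expMeasure lam (Ioi s) = ENNReal.ofReal (Real.exp (-(lam * s))) := by
  have := isProbabilityMeasure_expMeasure hlam
  have hexp : Real.exp (-(lam * s)) ≤ 1 :=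
    Real.exp_le_one_iff.2 (neg_nonpos.2 (mul_nonneg hlam.le hs))
  rw [← compl_Iic, prob_compl_eq_one_sub measurableSet_Iic, expMeasure_apply measurableSet_Iic,
    lintegral_exponentialPDF_eq_antiDeriv hlam, if_pos hs, ← ENNReal.ofReal_one,
    ← ENNReal.ofReal_sub _ (sub_nonneg.2 hexp), sub_sub_cancel]

lemma expMeasure_Ioi_eq_div (hlam : 0 < lam) {s : ℝ} (hs : 0 ≤ s) :
    expMeasure lam (Ioi s) = exponentialPDF lam s / ENNReal.ofReal lam := by
  rw [ENNReal.eq_div_iff (ENNReal.ofReal_pos.2 hlam).ne' ENNReal.ofReal_ne_top,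
    expMeasure_Ioi hlam hs, exponentialPDF_of_nonneg hs, ENNReal.ofReal_mul hlam.le]

lemma lintegral_min_expMeasure (hlam : 0 < lam) (t : ℝ) :
    ∫⁻ y, ENNReal.ofReal (min t y) ∂expMeasure lam
      = expMeasure lam (Iic t) / ENNReal.ofReal lam := by
  rcases lt_or_ge t 0 with ht | ht
  · have hIic : expMeasure lam (Iic t) = 0 :=
      measure_mono_null (Iic_subset_Iio.2 ht) expMeasure_Iio_zero
    have hmin : ∀ y, ENNReal.ofReal (min t y) = 0 := fun y =>
      ENNReal.ofReal_of_nonpos ((min_le_left t y).trans ht.le)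
    simp [hIic, hmin]
  have hmin : 0 ≤ᵐ[expMeasure lam] fun y => min t y := by
    filter_upwards [ae_nonneg_expMeasure] with y hy using le_min ht hy
  have hlam' : (ENNReal.ofReal lam)⁻¹ ≠ ∞ := ENNReal.inv_ne_top.2 (ENNReal.ofReal_pos.2 hlam).ne'
  rw [lintegral_eq_lintegral_meas_lt _ hmin (by fun_prop)]
  calc ∫⁻ s in Ioi 0, expMeasure lam {y | s < min t y}
      = ∫⁻ s in Ioo 0 t, expMeasure lam (Ioi s) := by
        rw [← Iio_inter_Ioi, ← Measure.restrict_restrict measurableSet_Iio,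
          ← lintegral_indicator measurableSet_Iio]
        refine lintegral_congr fun s => ?_
        by_cases hst : s < t <;> simp [hst, Ioi]
    _ = ∫⁻ s in Ioo 0 t, exponentialPDF lam s * (ENNReal.ofReal lam)⁻¹ :=
        setLIntegral_congr_fun measurableSet_Ioo fun s hs => by
          rw [expMeasure_Ioi_eq_div hlam hs.1.le, div_eq_mul_inv]
    _ = expMeasure lam (Iic t) / ENNReal.ofReal lam := by
        rw [lintegral_mul_const' _ _ hlam', ← div_eq_mul_inv, expMeasure_apply measurableSet_Iic,
          lintegral_Iic_eq_lintegral_Iio_add_Icc _ ht, lintegral_exponentialPDF_of_nonpos le_rfl,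
          zero_add, setLIntegral_congr Ioo_ae_eq_Icc]

lemma lintegral_min_of_indepFun_expMeasure {Ω : Type*} [MeasurableSpace Ω] {μ : Measure Ω}
    [IsFiniteMeasure μ] {T Y : Ω → ℝ} (hlam : 0 < lam) (hT : Measurable T) (hY : Measurable Y)
    (hTY : IndepFun T Y μ) (hYexp : μ.map Y = expMeasure lam) :
    ∫⁻ ω, ENNReal.ofReal (min (T ω) (Y ω)) ∂μ = μ {ω | Y ω ≤ T ω} / ENNReal.ofReal lam := by
  have := isProbabilityMeasure_expMeasure hlam
  have hmap : μ.map (fun ω => (T ω, Y ω)) = (μ.map T).prod (expMeasure lam) := by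
    rw [← hYexp]
    exact (indepFun_iff_map_prod_eq_prod_map_map hT.aemeasurable hY.aemeasurable).1 hTY
  have hpair : Measurable fun ω => (T ω, Y ω) := hT.prodMk hY
  have hmin : Measurable fun p : ℝ × ℝ => ENNReal.ofReal (min p.1 p.2) := by fun_prop
  have hle : MeasurableSet {p : ℝ × ℝ | p.2 ≤ p.1} := measurableSet_le measurable_snd measurable_fst
  have hlam' : (ENNReal.ofReal lam)⁻¹ ≠ ∞ := ENNReal.inv_ne_top.2 (ENNReal.ofReal_pos.2 hlam).ne'
  calc ∫⁻ ω, ENNReal.ofReal (min (T ω) (Y ω)) ∂μ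
      = ∫⁻ t, ∫⁻ y, ENNReal.ofReal (min t y) ∂expMeasure lam ∂μ.map T := by
        rw [← lintegral_map hmin hpair, hmap, lintegral_prod _ hmin.aemeasurable]
    _ = (∫⁻ t, expMeasure lam (Iic t) ∂μ.map T) / ENNReal.ofReal lam := by
        simp_rw [lintegral_min_expMeasure hlam, div_eq_mul_inv]
        exact lintegral_mul_const' _ _ hlam'
    _ = μ {ω | Y ω ≤ T ω} / ENNReal.ofReal lam := by
        rw [show {ω | Y ω ≤ T ω} = (fun ω => (T ω, Y ω)) ⁻¹' {p | p.2 ≤ p.1} from rfl,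
          ← Measure.map_apply hpair hle, hmap, Measure.prod_apply hle]
        rfl

end Exponential

theorem stmt2_general {Ω : Type*} [MeasurableSpace Ω] (μ : Measure Ω) [IsProbabilityMeasure μ]
    (C : ℕ → Ω → ℝ) (Ys Yd : Ω → ℝ) (lam : ℝ) (hlam : 0 < lam)
    (hCmeas : ∀ i, Measurable (C i)) (hYsmeas : Measurable Ys) (hYdmeas : Measurable Yd)
    (hCpos : ∀ i, ∀ᵐ ω ∂μ, 0 < C i ω) (hYspos : ∀ᵐ ω ∂μ, 0 < Ys ω)
    (hCiid : ∀ i j, IdentDistrib (C i) (C j) μ μ)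
    (hindepD : IndepFun (fun ω => (Ys ω, fun i => C i ω)) Yd μ)
    (hYd : μ.map Yd = expMeasure lam)
    (D : ℕ → Ω → ℝ) (hD : ∀ n ω, D n ω = ∑ i ∈ Finset.range n, C i ω)
    (B : ℝ → Ω → ℕ) (hB : ∀ t ω, B t ω = sInf {n | 1 ≤ n ∧ t ≤ D n ω})
    (Xr : Ω → ℝ) (hXr : ∀ ω, Xr ω = min (D (B (Ys ω) ω) ω) (Ys ω + Yd ω)) :
    ∫⁻ ω, ENNReal.ofReal (Xr ω) ∂μ
      = ∫⁻ ω, ENNReal.ofReal (Ys ω) ∂μ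
        + μ {ω | Ys ω + Yd ω ≤ D (B (Ys ω) ω) ω} / ENNReal.ofReal lam := by
  set T : Ω → ℝ := fun ω => overshoot (fun i => C i ω) (Ys ω)
  have hDB : ∀ ω, D (B (Ys ω) ω) ω = Ys ω + T ω := fun ω => by
    simp only [T, overshoot, firstPassage, hB, hD]
    ring
  have hT0 : ∀ᵐ ω ∂μ, 0 ≤ T ω := by
    filter_upwards [ae_tendsto_sum_range_atTop_of_identDistrib (fun n => hCiid n 0) hCpos]
      with ω hω
    obtain ⟨n, hn, h1n⟩ := ((hω.eventually_ge_atTop (Ys ω)).and (eventually_ge_atTop 1)).exists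
    exact overshoot_nonneg ⟨n, h1n, hn⟩
  have hYd0 : ∀ᵐ ω ∂μ, 0 ≤ Yd ω :=
    ae_of_ae_map hYdmeas.aemeasurable (hYd ▸ ae_nonneg_expMeasure)
  have hXr' : ∀ᵐ ω ∂μ, ENNReal.ofReal (Xr ω)
      = ENNReal.ofReal (Ys ω) + ENNReal.ofReal (min (T ω) (Yd ω)) := by
    filter_upwards [hYspos, hT0, hYd0] with ω hYs hT hYd
    rw [hXr, hDB, min_add_add_left, ENNReal.ofReal_add hYs.le (le_min hT hYd)]
  have hTmeas : Measurable T :=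
    measurable_overshoot.comp (hYsmeas.prodMk (measurable_pi_lambda _ hCmeas))
  have hPd : {ω | Ys ω + Yd ω ≤ D (B (Ys ω) ω) ω} = {ω | Yd ω ≤ T ω} := by
    simp only [hDB, add_le_add_iff_left]
  rw [lintegral_congr_ae hXr', lintegral_add_left hYsmeas.ennreal_ofReal, hPd,
    lintegral_min_of_indepFun_expMeasure hlam hTmeas hYdmeas
      (hindepD.comp measurable_overshoot measurable_id) hYd]

/-- If `Y^d` is exponential with rate `λ`, then `E[X^r] = E[Y^s] + P_d / λ`, where
`X^r = min(D_{B(Y^s)}, Y^s + Y^d)` and `P_d = P(D_{B(Y^s)} ≥ Y^s + Y^d)`. -/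
theorem stmt2 {Ω : Type*} [MeasurableSpace Ω] (μ : Measure Ω) [IsProbabilityMeasure μ]
    (C : ℕ → Ω → ℝ) (Ys Yd : Ω → ℝ) (lam : ℝ) (hlam : 0 < lam)
    (hCmeas : ∀ i, Measurable (C i)) (hYsmeas : Measurable Ys) (hYdmeas : Measurable Yd)
    (hCpos : ∀ i, ∀ᵐ ω ∂μ, 0 < C i ω) (hYspos : ∀ᵐ ω ∂μ, 0 < Ys ω)
    (hCiid : ∀ i j, IdentDistrib (C i) (C j) μ μ)
    (hCindep : iIndepFun C μ)
    (hindepS : IndepFun (fun ω => fun i => C i ω) Ys μ)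
    (hindepD : IndepFun (fun ω => (Ys ω, fun i => C i ω)) Yd μ)
    (hYd : μ.map Yd = expMeasure lam)
    (D : ℕ → Ω → ℝ) (hD : ∀ n ω, D n ω = ∑ i ∈ Finset.range n, C i ω)
    (B : ℝ → Ω → ℕ) (hB : ∀ t ω, B t ω = sInf {n | 1 ≤ n ∧ t ≤ D n ω})
    (Xr : Ω → ℝ) (hXr : ∀ ω, Xr ω = min (D (B (Ys ω) ω) ω) (Ys ω + Yd ω)) :
    ∫⁻ ω, ENNReal.ofReal (Xr ω) ∂μ
      = ∫⁻ ω, ENNReal.ofReal (Ys ω) ∂μ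
        + μ {ω | Ys ω + Yd ω ≤ D (B (Ys ω) ω) ω} / ENNReal.ofReal lam :=
  stmt2_general μ C Ys Yd lam hlam hCmeas hYsmeas hYdmeas hCpos hYspos hCiid hindepD hYd D hD B hB
    Xr hXr
end

section
/- Under the assumptions E[(Y^s)^2] < \infty and E[C^2] < \infty, the random variable K^r = inf{n\geq 1 : D_n \geq Y^s} satisfies E[(K^r)^2] < \infty. -/
open MeasureTheory ProbabilityTheory Filter Set
open scoped ENNReal Topology

/-!
The hitting time `K = inf {n ≥ 1 : D_n ≥ Y}` exceeds `n ≥ 1` only if `D_n < Y`, so either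
`Y > α n` or `D_n ≤ α n`. Since `E[e^{-C}] < 1`, a Chernoff bound gives `P(D_n ≤ α n) ≤ q^n`
with `q < 1` for small `α > 0`. Summing `E[K²] = ∑ₙ (2n+1) P(K > n)` against these tails
bounds `E[K²]` by `E[⌈Y/α⌉²]`, finite since `E[Y²] < ∞`, plus a convergent series `∑ₙ (2n+1) qⁿ`.
-/

namespace ENNReal

lemma natCast_sq_eq_tsum_ite (k : ℕ) :
    (k : ℝ≥0∞) ^ 2 = ∑' n : ℕ, if n < k then 2 * (n : ℝ≥0∞) + 1 else 0 := by
  rw [tsum_eq_sum (s := Finset.range k) fun n hn => by simpa using hn,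
    Finset.sum_congr rfl fun n hn => if_pos (Finset.mem_range.1 hn)]
  induction k with
  | zero => simp
  | succ k ih => rw [Finset.sum_range_succ, ← ih]; push_cast; ring

lemma tsum_two_mul_add_one_mul_ofReal_pow_lt_top {q : ℝ} (hq0 : 0 ≤ q) (hq1 : q < 1) :
    ∑' n : ℕ, (2 * (n : ℝ≥0∞) + 1) * ENNReal.ofReal (q ^ n) < ∞ := by
  have hsum : Summable fun n : ℕ => (2 * (n : ℝ) + 1) * q ^ n := by
    have hq : ‖q‖ < 1 := by rwa [Real.norm_of_nonneg hq0]
    refine (((summable_pow_mul_geometric_of_norm_lt_one 1 hq).mul_left 2).add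
      (summable_geometric_of_lt_one hq0 hq1)).congr fun n => ?_
    simp only [pow_one]
    ring
  have hterm : ∀ n : ℕ, (2 * (n : ℝ≥0∞) + 1) * ENNReal.ofReal (q ^ n)
      = ENNReal.ofReal ((2 * (n : ℝ) + 1) * q ^ n) := fun n => by
    rw [ENNReal.ofReal_mul (by positivity)]
    norm_cast
  rw [tsum_congr hterm, ← ENNReal.ofReal_tsum_of_nonneg (fun n => by positivity) hsum]
  exact ENNReal.ofReal_lt_top

end ENNReal

lemma measurable_sInf_setOf_nat {Ω : Type*} [MeasurableSpace Ω] {p : ℕ → Ω → Prop}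
    (hp : ∀ n, MeasurableSet {ω | p n ω}) : Measurable fun ω => sInf {n | p n ω} := by
  refine measurable_of_Ioi fun k => ?_
  have hpre : (fun ω => sInf {n | p n ω}) ⁻¹' Ioi k
      = (⋃ n, {ω | p n ω}) ∩ ⋂ m, ⋂ (_ : m ≤ k), {ω | p m ω}ᶜ := by
    ext ω
    simp only [mem_preimage, mem_Ioi, mem_inter_iff, mem_iUnion, mem_iInter, mem_compl_iff,
      mem_ofPred_eq]
    refine ⟨fun h => ⟨Nat.nonempty_of_pos_sInf (k.zero_le.trans_lt h),
      fun m hm => Nat.notMem_of_lt_sInf (hm.trans_lt h)⟩, fun ⟨hne, hlt⟩ => ?_⟩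
    by_contra! hle
    exact hlt _ hle (Nat.sInf_mem hne)
  rw [hpre]
  exact (MeasurableSet.iUnion hp).inter
    (MeasurableSet.iInter fun m => MeasurableSet.iInter fun _ => (hp m).compl)

section Moments

variable {Ω : Type*} [MeasurableSpace Ω] {μ : Measure Ω}

lemma lintegral_natCast_sq_eq_tsum {f : Ω → ℕ} (hf : Measurable f) :
    ∫⁻ ω, (f ω : ℝ≥0∞) ^ 2 ∂μ = ∑' n : ℕ, (2 * (n : ℝ≥0∞) + 1) * μ {ω | n < f ω} := by
  have hset : ∀ n : ℕ, MeasurableSet {ω | n < f ω} := fun n => measurableSet_lt measurable_const hf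
  have hpt : ∀ ω, (f ω : ℝ≥0∞) ^ 2
      = ∑' n : ℕ, {ω | n < f ω}.indicator (fun _ => 2 * (n : ℝ≥0∞) + 1) ω := fun ω => by
    simp only [ENNReal.natCast_sq_eq_tsum_ite, indicator_apply, mem_ofPred_eq]
  simp_rw [hpt]
  rw [lintegral_tsum fun n => (measurable_const.indicator (hset n)).aemeasurable]
  exact tsum_congr fun n => lintegral_indicator_const (hset n) _

lemma lintegral_natCeil_sq_lt_top [IsFiniteMeasure μ] {Y : Ω → ℝ}
    (hY2 : Integrable (fun ω => Y ω ^ 2) μ) : ∫⁻ ω, (⌈Y ω⌉₊ : ℝ≥0∞) ^ 2 ∂μ < ∞ := by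
  have hpt : ∀ ω, (⌈Y ω⌉₊ : ℝ≥0∞) ^ 2 ≤ ENNReal.ofReal (2 * Y ω ^ 2 + 2) := fun ω => by
    have hceil : (⌈Y ω⌉₊ : ℝ) < |Y ω| + 1 :=
      (Nat.cast_le.2 (Nat.ceil_mono (le_abs_self _))).trans_lt (Nat.ceil_lt_add_one (abs_nonneg _))
    rw [← ENNReal.ofReal_natCast, ← ENNReal.ofReal_pow (Nat.cast_nonneg _)]
    refine ENNReal.ofReal_le_ofReal ?_
    nlinarith [sq_abs (Y ω), sq_nonneg (|Y ω| - 1), Nat.cast_nonneg (α := ℝ) ⌈Y ω⌉₊]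
  exact (lintegral_mono hpt).trans_lt
    ((hY2.const_mul 2).add (integrable_const 2)).lintegral_lt_top

lemma integrable_exp_mul_of_nonneg [IsFiniteMeasure μ] {X : Ω → ℝ} (hX : AEMeasurable X μ)
    (hnonneg : ∀ᵐ ω ∂μ, 0 ≤ X ω) {t : ℝ} (ht : t ≤ 0) :
    Integrable (fun ω => Real.exp (t * X ω)) μ := by
  refine (integrable_const 1).mono' (hX.const_mul t).exp.aestronglyMeasurable ?_
  filter_upwards [hnonneg] with ω hω
  rw [Real.norm_of_nonneg (Real.exp_pos _).le, Real.exp_le_one_iff]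
  exact mul_nonpos_of_nonpos_of_nonneg ht hω

lemma mgf_lt_one_of_pos [IsProbabilityMeasure μ] {X : Ω → ℝ} (hX : AEMeasurable X μ)
    (hpos : ∀ᵐ ω ∂μ, 0 < X ω) {t : ℝ} (ht : t < 0) : mgf X μ t < 1 := by
  have hint := integrable_exp_mul_of_nonneg hX (hpos.mono fun _ h => h.le) ht.le
  have hlt : ∀ᵐ ω ∂μ, 0 < 1 - Real.exp (t * X ω) := hpos.mono fun ω h => by
    simpa using mul_neg_of_neg_of_pos ht h
  have hgap : 0 < ∫ ω, (1 - Real.exp (t * X ω)) ∂μ := by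
    refine (integral_pos_iff_support_of_nonneg_ae (hlt.mono fun _ h => h.le)
      ((integrable_const 1).sub hint)).2 (pos_iff_ne_zero.2 fun h0 => ?_)
    obtain ⟨ω, hω, hωpos⟩ := ((measure_eq_zero_iff_ae_notMem.1 h0).and hlt).exists
    exact hω hωpos.ne'
  rw [integral_sub (integrable_const 1) hint, integral_const, probReal_univ, one_smul] at hgap
  rw [mgf]
  linarith

lemma measure_sum_range_le_le_pow [IsProbabilityMeasure μ] {X : ℕ → Ω → ℝ}
    (hmeas : ∀ i, Measurable (X i)) (hindep : iIndepFun X μ)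
    (hident : ∀ i, IdentDistrib (X i) (X 0) μ μ) (hnonneg : ∀ i, ∀ᵐ ω ∂μ, 0 ≤ X i ω)
    (a : ℝ) (n : ℕ) :
    μ {ω | ∑ i ∈ Finset.range n, X i ω ≤ n * a}
      ≤ ENNReal.ofReal ((Real.exp a * mgf (X 0) μ (-1)) ^ n) := by
  have hS_nonneg : ∀ᵐ ω ∂μ, 0 ≤ (∑ i ∈ Finset.range n, X i) ω := by
    filter_upwards [ae_all_iff.2 hnonneg] with ω hω
    simpa only [Finset.sum_apply] using Finset.sum_nonneg fun i _ => hω i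
  have hS_meas : AEMeasurable (∑ i ∈ Finset.range n, X i) μ :=
    Finset.aemeasurable_sum _ fun i _ => (hmeas i).aemeasurable
  have hmgf : mgf (∑ i ∈ Finset.range n, X i) μ (-1) = mgf (X 0) μ (-1) ^ n := by
    rw [hindep.mgf_sum hmeas, Finset.prod_congr rfl fun i _ =>
      mgf_congr_of_identDistrib (X i) (X 0) (hident i) (-1), Finset.prod_const, Finset.card_range]
  have hchernoff := measure_le_le_exp_mul_mgf (n * a) (by norm_num : (-1 : ℝ) ≤ 0)
    (integrable_exp_mul_of_nonneg hS_meas hS_nonneg (by norm_num))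
  rw [hmgf, neg_neg, one_mul, Real.exp_nat_mul, ← mul_pow] at hchernoff
  simp only [Finset.sum_apply] at hchernoff
  rwa [← ofReal_measureReal, ENNReal.ofReal_le_ofReal_iff
    (pow_nonneg (mul_nonneg (Real.exp_pos a).le (mgf_nonneg)) n)]

end Moments

lemma exists_pos_exp_mul_lt_one {r : ℝ} (hr : r < 1) : ∃ α > 0, Real.exp α * r < 1 := by
  have hlim : Tendsto (fun α => Real.exp α * r) (𝓝[>] 0) (𝓝 r) := by
    refine ((by fun_prop : Continuous fun α => Real.exp α * r).tendsto' 0 r ?_).mono_left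
      nhdsWithin_le_nhds
    simp
  obtain ⟨α, hlt, hα⟩ := ((hlim.eventually (gt_mem_nhds hr)).and self_mem_nhdsWithin).exists
  exact ⟨α, hα, hlt⟩

lemma lintegral_sInf_sq_lt_top {Ω : Type*} [MeasurableSpace Ω] {μ : Measure Ω}
    [IsProbabilityMeasure μ] {D : ℕ → Ω → ℝ} {Y : Ω → ℝ} (hD : ∀ n, Measurable (D n))
    (hY : Measurable Y) (hY2 : Integrable (fun ω => Y ω ^ 2) μ) {α q : ℝ} (hα : 0 < α)
    (hq0 : 0 ≤ q) (hq1 : q < 1) (hlower : ∀ n : ℕ, μ {ω | D n ω ≤ n * α} ≤ ENNReal.ofReal (q ^ n)) :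
    ∫⁻ ω, ((sInf {n | 1 ≤ n ∧ Y ω ≤ D n ω} : ℕ) : ℝ≥0∞) ^ 2 ∂μ < ∞ := by
  set K : Ω → ℕ := fun ω => sInf {n | 1 ≤ n ∧ Y ω ≤ D n ω}
  set N : Ω → ℕ := fun ω => ⌈Y ω / α⌉₊
  have hK : Measurable K :=
    measurable_sInf_setOf_nat fun n => (MeasurableSet.const _).inter (measurableSet_le hY (hD n))
  have hN : Measurable N := (hY.div_const α).nat_ceil
  have hN2 : Integrable (fun ω => (Y ω / α) ^ 2) μ := by
    simpa only [div_pow] using hY2.div_const (α ^ 2)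
  have hsubset : ∀ n, 1 ≤ n → {ω | n < K ω} ⊆ {ω | n < N ω} ∪ {ω | D n ω ≤ n * α} := by
    intro n hn ω hω
    have hDY : D n ω < Y ω := by
      by_contra! hle
      exact Nat.notMem_of_lt_sInf hω ⟨hn, hle⟩
    rcases lt_or_ge (n * α) (Y ω) with hlt | hle
    · exact Or.inl (Nat.lt_ceil.2 ((lt_div_iff₀ hα).2 hlt))
    · exact Or.inr (by simp only [mem_ofPred_eq]; linarith)
  have htail : ∀ n : ℕ, μ {ω | n < K ω} ≤ μ {ω | n < N ω} + ENNReal.ofReal (q ^ n) := by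
    rintro (_ | n)
    · simpa using le_add_left prob_le_one
    calc μ {ω | n + 1 < K ω}
        ≤ μ {ω | n + 1 < N ω} + μ {ω | D (n + 1) ω ≤ ↑(n + 1) * α} :=
          (measure_mono (hsubset _ n.succ_pos)).trans (measure_union_le _ _)
      _ ≤ _ := by gcongr; exact hlower _
  calc ∫⁻ ω, (K ω : ℝ≥0∞) ^ 2 ∂μ
      = ∑' n : ℕ, (2 * (n : ℝ≥0∞) + 1) * μ {ω | n < K ω} := lintegral_natCast_sq_eq_tsum hK
    _ ≤ ∑' n : ℕ, ((2 * (n : ℝ≥0∞) + 1) * μ {ω | n < N ω}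
          + (2 * (n : ℝ≥0∞) + 1) * ENNReal.ofReal (q ^ n)) :=
        ENNReal.tsum_le_tsum fun n => by rw [← mul_add]; gcongr; exact htail n
    _ = ∫⁻ ω, (N ω : ℝ≥0∞) ^ 2 ∂μ + ∑' n : ℕ, (2 * (n : ℝ≥0∞) + 1) * ENNReal.ofReal (q ^ n) := by
        rw [ENNReal.tsum_add, lintegral_natCast_sq_eq_tsum hN]
    _ < ∞ := ENNReal.add_lt_top.2 ⟨lintegral_natCeil_sq_lt_top hN2,
        ENNReal.tsum_two_mul_add_one_mul_ofReal_pow_lt_top hq0 hq1⟩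

theorem stmt5_general {Ω : Type*} [MeasurableSpace Ω] (μ : Measure Ω) [IsProbabilityMeasure μ]
    (C : ℕ → Ω → ℝ) (Ys : Ω → ℝ)
    (hCmeas : ∀ i, Measurable (C i)) (hYsmeas : Measurable Ys)
    (hCpos : ∀ i, ∀ᵐ ω ∂μ, 0 < C i ω)
    (hCiid : ∀ i j, IdentDistrib (C i) (C j) μ μ)
    (hCindep : iIndepFun C μ)
    (hYs2 : Integrable (fun ω => (Ys ω) ^ 2) μ)
    (D : ℕ → Ω → ℝ) (hD : ∀ n ω, D n ω = ∑ i ∈ Finset.range n, C i ω)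
    (Kr : Ω → ℕ) (hKr : ∀ ω, Kr ω = sInf {n | 1 ≤ n ∧ Ys ω ≤ D n ω}) :
    ∫⁻ ω, ((Kr ω : ℝ≥0∞)) ^ 2 ∂μ < ∞ := by
  obtain ⟨α, hα, hq1⟩ :=
    exists_pos_exp_mul_lt_one (mgf_lt_one_of_pos (hCmeas 0).aemeasurable (hCpos 0) neg_one_lt_zero)
  have hq0 : 0 ≤ Real.exp α * mgf (C 0) μ (-1) := mul_nonneg (Real.exp_pos α).le mgf_nonneg
  have hDsum : D = fun n ω => ∑ i ∈ Finset.range n, C i ω := funext₂ hD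
  have hKr' : Kr = fun ω => sInf {n | 1 ≤ n ∧ Ys ω ≤ D n ω} := funext hKr
  subst hDsum hKr'
  refine lintegral_sInf_sq_lt_top (fun n => Finset.measurable_sum _ fun i _ => hCmeas i)
    hYsmeas hYs2 hα hq0 hq1 fun n => ?_
  exact measure_sum_range_le_le_pow hCmeas hCindep (fun i => hCiid i 0)
    (fun i => (hCpos i).mono fun _ h => h.le) α n

/-- Under `E[(Y^s)²] < ∞` and `E[C²] < ∞`, the random variable
`K^r = inf {n ≥ 1 : D_n ≥ Y^s}` satisfies `E[(K^r)²] < ∞`. -/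
theorem stmt5 {Ω : Type*} [MeasurableSpace Ω] (μ : Measure Ω) [IsProbabilityMeasure μ]
    (C : ℕ → Ω → ℝ) (Ys : Ω → ℝ)
    (hCmeas : ∀ i, Measurable (C i)) (hYsmeas : Measurable Ys)
    (hCpos : ∀ i, ∀ᵐ ω ∂μ, 0 < C i ω) (hYspos : ∀ᵐ ω ∂μ, 0 < Ys ω)
    (hCiid : ∀ i j, IdentDistrib (C i) (C j) μ μ)
    (hCindep : iIndepFun C μ)
    (hindep : IndepFun (fun ω => fun i => C i ω) Ys μ)
    (hC2 : Integrable (fun ω => (C 0 ω) ^ 2) μ)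
    (hYs2 : Integrable (fun ω => (Ys ω) ^ 2) μ)
    (D : ℕ → Ω → ℝ) (hD : ∀ n ω, D n ω = ∑ i ∈ Finset.range n, C i ω)
    (Kr : Ω → ℕ) (hKr : ∀ ω, Kr ω = sInf {n | 1 ≤ n ∧ Ys ω ≤ D n ω}) :
    ∫⁻ ω, ((Kr ω : ℝ≥0∞)) ^ 2 ∂μ < ∞ :=
  stmt5_general μ C Ys hCmeas hYsmeas hCpos hCiid hCindep hYs2 D hD Kr hKr
end

section
/- E[C_{B(Y^s)}^2] \leq E[C^2] E[K^r], where B(Y^s) is the index of the first inspection at or after Y^s and K^r = B(Y^s). -/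
/-!
Since `K ≥ 1`, the overshooting gap satisfies `C_K² ≤ ∑_{n < K} C_{n+1}²`. The event `{K > n}`
is determined by `C_1, …, C_n` and `Y`, hence independent of `C_{n+1}`, so
`E[C_{n+1}²; K > n] = E[C²] P(K > n)`, and summing over `n` gives `E[C²] ∑_n P(K > n) = E[C²] E[K]`.
The strong law of large numbers makes `D_n → ∞`, so `K` is almost surely well defined.
-/

open MeasureTheory ProbabilityTheory Filter Set
open scoped ENNReal Topology

section

variable {Ω : Type*} {mΩ : MeasurableSpace Ω} {μ : Measure Ω}

namespace ProbabilityTheory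

theorem indep_sup_right_of_indep_sup_left [IsZeroOrProbabilityMeasure μ]
    {m₁ m₂ m₃ : MeasurableSpace Ω} (h₁ : m₁ ≤ mΩ) (h₂ : m₂ ≤ mΩ) (h₃ : m₃ ≤ mΩ)
    (h₁₂ : Indep m₁ m₂ μ) (h₁₂₃ : Indep (m₁ ⊔ m₂) m₃ μ) : Indep m₁ (m₂ ⊔ m₃) μ := by
  let p : Set (Set Ω) := image2 (· ∩ ·) {s | MeasurableSet[m₂] s} {s | MeasurableSet[m₃] s}
  have hp : m₂ ⊔ m₃ = MeasurableSpace.generateFrom p := by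
    refine le_antisymm (sup_le ?_ ?_) (MeasurableSpace.generateFrom_le ?_)
    · exact fun s hs ↦ MeasurableSpace.measurableSet_generateFrom
        ⟨s, hs, univ, MeasurableSet.univ, inter_univ s⟩
    · exact fun s hs ↦ MeasurableSpace.measurableSet_generateFrom
        ⟨univ, MeasurableSet.univ, s, hs, univ_inter s⟩
    · rintro _ ⟨s₂, hs₂, s₃, hs₃, rfl⟩
      exact (le_sup_left (b := m₃) _ hs₂).inter (le_sup_right (a := m₂) _ hs₃)
  have hpi : IsPiSystem p := by
    rintro _ ⟨s₂, hs₂, s₃, hs₃, rfl⟩ _ ⟨t₂, ht₂, t₃, ht₃, rfl⟩ _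
    exact ⟨s₂ ∩ t₂, hs₂.inter ht₂, s₃ ∩ t₃, hs₃.inter ht₃, inter_inter_inter_comm _ _ _ _⟩
  refine IndepSets.indep h₁ (sup_le h₂ h₃) (@MeasurableSpace.isPiSystem_measurableSet Ω m₁) hpi
    (@MeasurableSpace.generateFrom_measurableSet Ω m₁).symm hp ?_
  rw [IndepSets_iff]
  rintro s _ hs ⟨s₂, hs₂, s₃, hs₃, rfl⟩
  have h₁₂₃' := (Indep_iff _ _ _).1 h₁₂₃
  calc μ (s ∩ (s₂ ∩ s₃)) = μ (s ∩ s₂) * μ s₃ := by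
        rw [← inter_assoc]
        exact h₁₂₃' _ _ ((le_sup_left (b := m₂) _ hs).inter (le_sup_right (a := m₁) _ hs₂)) hs₃
    _ = μ s * (μ s₂ * μ s₃) := by rw [(Indep_iff _ _ _).1 h₁₂ _ _ hs hs₂, mul_assoc]
    _ = μ s * μ (s₂ ∩ s₃) := by rw [h₁₂₃' _ _ (le_sup_right (a := m₁) _ hs₂) hs₃]

theorem iIndepFun.indep_comap_sup_comap_of_indepFun {ι β γ : Type*} [MeasurableSpace β]
    [MeasurableSpace γ] [IsZeroOrProbabilityMeasure μ] {X : ι → Ω → β} {Y : Ω → γ}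
    (hXm : ∀ i, Measurable (X i)) (hYm : Measurable Y) (hX : iIndepFun X μ)
    (hXY : IndepFun (fun ω i ↦ X i ω) Y μ) {i : ι} {S : Set ι} (hi : i ∉ S) :
    Indep (MeasurableSpace.comap (X i) ‹_›)
      ((⨆ j ∈ S, MeasurableSpace.comap (X j) ‹_›) ⊔ MeasurableSpace.comap Y ‹_›) μ := by
  have hcomap_le (j : ι) : MeasurableSpace.comap (X j) ‹_›
      ≤ MeasurableSpace.comap (fun ω i ↦ X i ω) MeasurableSpace.pi :=
    Measurable.comap_le (m₁ := MeasurableSpace.comap (fun ω i ↦ X i ω) MeasurableSpace.pi)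
      ((measurable_pi_apply j).comp (Measurable.of_comap_le (f := fun ω i ↦ X i ω) le_rfl))
  have hS : Indep (MeasurableSpace.comap (X i) ‹_›)
      (⨆ j ∈ S, MeasurableSpace.comap (X j) ‹_›) μ := by
    simpa using indep_iSup_of_disjoint (fun j ↦ (hXm j).comap_le) hX.iIndep
      (S := {i}) (T := S) (disjoint_singleton_left.2 hi)
  refine indep_sup_right_of_indep_sup_left (hXm i).comap_le
    (iSup₂_le fun j _ ↦ (hXm j).comap_le) hYm.comap_le hS ?_
  exact indep_of_indep_of_le_left hXY (sup_le (hcomap_le i) (iSup₂_le fun j _ ↦ hcomap_le j))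

theorem ae_tendsto_sum_range_atTop {X : ℕ → Ω → ℝ} (hint : Integrable (X 0) μ)
    (hindep : Pairwise fun i j ↦ IndepFun (X i) (X j) μ)
    (hident : ∀ i, IdentDistrib (X i) (X 0) μ μ) (hpos : 0 < μ[X 0]) :
    ∀ᵐ ω ∂μ, Tendsto (fun n ↦ ∑ i ∈ Finset.range n, X i ω) atTop atTop := by
  filter_upwards [strong_law_ae X hint hindep hident] with ω hω
  refine (hω.pos_mul_atTop hpos tendsto_natCast_atTop_atTop).congr' ?_
  filter_upwards [eventually_ne_atTop 0] with n hn
  rw [smul_eq_mul]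
  field_simp

end ProbabilityTheory

theorem MeasureTheory.integral_pos_of_ae_pos [NeZero μ] {f : Ω → ℝ} (hf : ∀ᵐ ω ∂μ, 0 < f ω)
    (hint : Integrable f μ) : 0 < ∫ ω, f ω ∂μ := by
  rw [integral_pos_iff_support_of_nonneg_ae (hf.mono fun _ h ↦ h.le) hint, pos_iff_ne_zero, Ne,
    measure_eq_zero_iff_ae_notMem]
  intro h
  obtain ⟨ω, hpos, hzero⟩ := (hf.and h).exists
  exact hzero hpos.ne'

theorem tsum_ite_lt {M : Type*} [AddCommMonoid M] [TopologicalSpace M] (k : ℕ) (f : ℕ → M) :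
    ∑' n, (if n < k then f n else 0) = ∑ n ∈ Finset.range k, f n := by
  rw [tsum_eq_sum (s := Finset.range k) fun n hn ↦ if_neg (by simpa using hn)]
  exact Finset.sum_congr rfl fun n hn ↦ if_pos (by simpa using hn)

theorem MeasureTheory.lintegral_comp_index_le {X : ℕ → Ω → ℝ≥0∞} {K : Ω → ℕ} {A : ℕ → Set Ω}
    {a : ℝ≥0∞} (hX : ∀ n, Measurable (X n)) (hA : ∀ n, MeasurableSet (A n))
    (hAK : ∀ᵐ ω ∂μ, ∀ n, ω ∈ A n ↔ n < K ω) (hK : ∀ᵐ ω ∂μ, 0 < K ω)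
    (hXA : ∀ n, ∫⁻ ω in A n, X (n + 1) ω ∂μ = a * μ (A n)) :
    ∫⁻ ω, X (K ω) ω ∂μ ≤ a * ∫⁻ ω, (K ω : ℝ≥0∞) ∂μ := by
  have hindicator (f : ℕ → Ω → ℝ≥0∞) :
      ∀ᵐ ω ∂μ, ∑' n, (A n).indicator (f n) ω = ∑ n ∈ Finset.range (K ω), f n ω := by
    filter_upwards [hAK] with ω hω
    simp only [indicator, hω, tsum_ite_lt]
  have hbound : ∀ᵐ ω ∂μ, X (K ω) ω ≤ ∑' n, (A n).indicator (X (n + 1)) ω := by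
    filter_upwards [hindicator (fun n ↦ X (n + 1)), hK] with ω hω hKω
    rw [hω, ← Nat.sub_add_cancel hKω]
    exact Finset.single_le_sum (f := fun n ↦ X (n + 1) ω) (fun _ _ ↦ zero_le)
      (Finset.self_mem_range_succ _)
  calc ∫⁻ ω, X (K ω) ω ∂μ
      ≤ ∫⁻ ω, ∑' n, (A n).indicator (X (n + 1)) ω ∂μ := lintegral_mono_ae hbound
    _ = ∑' n, a * μ (A n) := by
      rw [lintegral_tsum fun n ↦ ((hX _).indicator (hA n)).aemeasurable]
      exact tsum_congr fun n ↦ (lintegral_indicator (hA n) _).trans (hXA n)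
    _ = a * ∫⁻ ω, ∑' n, (A n).indicator 1 ω ∂μ := by
      rw [ENNReal.tsum_mul_left,
        lintegral_tsum fun n ↦ (measurable_one.indicator (hA n)).aemeasurable]
      simp only [lintegral_indicator_one (hA _)]
    _ = a * ∫⁻ ω, (K ω : ℝ≥0∞) ∂μ := by
      refine congrArg _ (lintegral_congr_ae ?_)
      filter_upwards [hindicator 1] with ω hω
      simpa using hω

namespace Renewal

variable {C : ℕ → Ω → ℝ} {Y : Ω → ℝ}

theorem ae_tendsto_sum_Icc_atTop [NeZero μ] (hpos : ∀ᵐ ω ∂μ, 0 < C 1 ω)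
    (hint : Integrable (C 1) μ) (hindep : Pairwise fun i j ↦ IndepFun (C i) (C j) μ)
    (hident : ∀ i, IdentDistrib (C i) (C 1) μ μ) :
    ∀ᵐ ω ∂μ, Tendsto (fun n ↦ ∑ i ∈ Finset.Icc 1 n, C i ω) atTop atTop := by
  have hsum (ω : Ω) (n : ℕ) :
      ∑ i ∈ Finset.Icc 1 n, C i ω = ∑ i ∈ Finset.range n, C (i + 1) ω := by
    rw [Finset.range_eq_Ico, Finset.sum_Ico_add' (f := fun i ↦ C i ω)]
    rfl
  simp only [hsum]
  exact ae_tendsto_sum_range_atTop hint (fun i j hij ↦ hindep (by omega))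
    (fun i ↦ hident (i + 1)) (integral_pos_of_ae_pos hpos hint)

/-- The event `{K > n}`, expressed through `C 1, …, C n` and `Y` alone. -/
def notReached (C : ℕ → Ω → ℝ) (Y : Ω → ℝ) (n : ℕ) : Set Ω :=
  ⋂ m ∈ Icc 1 n, {ω | ∑ i ∈ Finset.Icc 1 m, C i ω < Y ω}

theorem lt_sInf_iff_mem_notReached {ω : Ω} {n : ℕ}
    (hne : {m | 1 ≤ m ∧ Y ω ≤ ∑ i ∈ Finset.Icc 1 m, C i ω}.Nonempty) :
    n < sInf {m | 1 ≤ m ∧ Y ω ≤ ∑ i ∈ Finset.Icc 1 m, C i ω} ↔ ω ∈ notReached C Y n := by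
  simp only [notReached, mem_iInter, mem_Icc, mem_ofPred_eq, and_imp]
  constructor
  · intro h m hm₁ hmn
    by_contra! hle
    exact Nat.notMem_of_lt_sInf (hmn.trans_lt h) ⟨hm₁, hle⟩
  · intro h
    by_contra! hle
    obtain ⟨hm₁, hm⟩ := Nat.sInf_mem hne
    exact (h _ hm₁ hle).not_ge hm

abbrev pastSigma (C : ℕ → Ω → ℝ) (Y : Ω → ℝ) (n : ℕ) : MeasurableSpace Ω :=
  (⨆ j ∈ Icc 1 n, MeasurableSpace.comap (C j) inferInstance) ⊔ MeasurableSpace.comap Y inferInstance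

theorem pastSigma_le (hCm : ∀ i, Measurable (C i)) (hYm : Measurable Y) (n : ℕ) :
    pastSigma C Y n ≤ mΩ :=
  sup_le (iSup₂_le fun j _ ↦ (hCm j).comap_le) hYm.comap_le

theorem measurableSet_notReached (n : ℕ) : MeasurableSet[pastSigma C Y n] (notReached C Y n) := by
  refine MeasurableSet.biInter (to_countable (Icc 1 n)) fun m hm ↦ measurableSet_lt ?_ ?_
  · refine Finset.measurable_sum _ fun i hi ↦ (Measurable.of_comap_le le_rfl).mono
      (le_sup_left.trans' (le_iSup₂_of_le i ?_ le_rfl)) le_rfl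
    simp only [Finset.mem_Icc, mem_Icc] at hi hm ⊢
    omega
  · exact (Measurable.of_comap_le le_rfl).mono le_sup_right le_rfl

theorem setLIntegral_notReached [IsZeroOrProbabilityMeasure μ] (hCm : ∀ i, Measurable (C i))
    (hYm : Measurable Y) (hC : iIndepFun C μ) (hCY : IndepFun (fun ω i ↦ C i ω) Y μ)
    {f : ℝ → ℝ≥0∞} (hf : Measurable f) (n : ℕ) :
    ∫⁻ ω in notReached C Y n, f (C (n + 1) ω) ∂μ
      = (∫⁻ ω, f (C (n + 1) ω) ∂μ) * μ (notReached C Y n) := by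
  have hindep : Indep (MeasurableSpace.comap (C (n + 1)) inferInstance) (pastSigma C Y n) μ :=
    hC.indep_comap_sup_comap_of_indepFun hCm hYm hCY (by simp)
  have hF := pastSigma_le hCm hYm n
  have hA := measurableSet_notReached (C := C) (Y := Y) n
  calc ∫⁻ ω in notReached C Y n, f (C (n + 1) ω) ∂μ
      = ∫⁻ ω, f (C (n + 1) ω) * (notReached C Y n).indicator 1 ω ∂μ := by
        rw [← lintegral_indicator (hF _ hA)]
        congr with ω
        by_cases h : ω ∈ notReached C Y n <;> simp [h]
    _ = (∫⁻ ω, f (C (n + 1) ω) ∂μ) * ∫⁻ ω, (notReached C Y n).indicator 1 ω ∂μ :=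
      lintegral_mul_eq_lintegral_mul_lintegral_of_independent_measurableSpace
        (hCm _).comap_le hF hindep (hf.comp (Measurable.of_comap_le le_rfl))
        (Measurable.indicator measurable_const hA)
    _ = _ := by rw [lintegral_indicator_one (hF _ hA)]

end Renewal

end

theorem stmt6_general {Ω : Type*} [MeasurableSpace Ω] (μ : Measure Ω) [IsProbabilityMeasure μ]
    (C : ℕ → Ω → ℝ) (Ys : Ω → ℝ)
    (hCmeas : ∀ i, Measurable (C i)) (hYsmeas : Measurable Ys)
    (hCpos : ∀ i, ∀ᵐ ω ∂μ, 0 < C i ω)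
    (hCiid : ∀ i j, IdentDistrib (C i) (C j) μ μ)
    (hCindep : iIndepFun C μ)
    (hindep : IndepFun (fun ω => fun i => C i ω) Ys μ)
    (hC2 : Integrable (fun ω => (C 1 ω) ^ 2) μ)
    (D : ℕ → Ω → ℝ) (hD : ∀ n ω, D n ω = ∑ i ∈ Finset.Icc 1 n, C i ω)
    (Kr : Ω → ℕ) (hKr : ∀ ω, Kr ω = sInf {n | 1 ≤ n ∧ Ys ω ≤ D n ω}) :
    ∫⁻ ω, ENNReal.ofReal ((C (Kr ω) ω) ^ 2) ∂μ
      ≤ (∫⁻ ω, ENNReal.ofReal ((C 1 ω) ^ 2) ∂μ) * ∫⁻ ω, (Kr ω : ℝ≥0∞) ∂μ := by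
  obtain rfl : D = fun n ω ↦ ∑ i ∈ Finset.Icc 1 n, C i ω := funext fun n ↦ funext (hD n)
  obtain rfl : Kr = fun ω ↦ sInf {n | 1 ≤ n ∧ Ys ω ≤ ∑ i ∈ Finset.Icc 1 n, C i ω} := funext hKr
  have hreached : ∀ᵐ ω ∂μ, {n | 1 ≤ n ∧ Ys ω ≤ ∑ i ∈ Finset.Icc 1 n, C i ω}.Nonempty := by
    have hCint : Integrable (C 1) μ :=
      ((memLp_two_iff_integrable_sq (hCmeas 1).aestronglyMeasurable).2 hC2).integrable one_le_two
    filter_upwards [Renewal.ae_tendsto_sum_Icc_atTop (hCpos 1) hCint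
      (fun i j hij ↦ hCindep.indepFun hij) (fun i ↦ hCiid i 1)] with ω hω
    exact ((eventually_ge_atTop 1).and (hω.eventually_ge_atTop (Ys ω))).exists
  have hsq : Measurable fun x : ℝ ↦ ENNReal.ofReal (x ^ 2) := by fun_prop
  refine lintegral_comp_index_le (X := fun n ω ↦ ENNReal.ofReal (C n ω ^ 2))
    (A := Renewal.notReached C Ys) (fun n ↦ hsq.comp (hCmeas n))
    (fun n ↦ Renewal.pastSigma_le hCmeas hYsmeas n _ (Renewal.measurableSet_notReached n))
    ?_ ?_ fun n ↦ ?_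
  · filter_upwards [hreached] with ω hω n using (Renewal.lt_sInf_iff_mem_notReached hω).symm
  · filter_upwards [hreached] with ω hω using (Nat.sInf_mem hω).1
  · rw [Renewal.setLIntegral_notReached hCmeas hYsmeas hCindep hindep hsq n]
    exact congrArg (· * _) ((hCiid (n + 1) 1).comp hsq).lintegral_eq

/-- `E[C_{B(Y^s)}²] ≤ E[C²] E[K^r]`, where `B(Y^s) = K^r` is the index of the first
inspection at or after `Y^s`.  Here the gaps are `C_1, C_2, …` and `D_n = C_1 + ⋯ + C_n`. -/
theorem stmt6 {Ω : Type*} [MeasurableSpace Ω] (μ : Measure Ω) [IsProbabilityMeasure μ]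
    (C : ℕ → Ω → ℝ) (Ys : Ω → ℝ)
    (hCmeas : ∀ i, Measurable (C i)) (hYsmeas : Measurable Ys)
    (hCpos : ∀ i, ∀ᵐ ω ∂μ, 0 < C i ω) (hYspos : ∀ᵐ ω ∂μ, 0 < Ys ω)
    (hCiid : ∀ i j, IdentDistrib (C i) (C j) μ μ)
    (hCindep : iIndepFun C μ)
    (hindep : IndepFun (fun ω => fun i => C i ω) Ys μ)
    (hC2 : Integrable (fun ω => (C 1 ω) ^ 2) μ)
    (D : ℕ → Ω → ℝ) (hD : ∀ n ω, D n ω = ∑ i ∈ Finset.Icc 1 n, C i ω)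
    (Kr : Ω → ℕ) (hKr : ∀ ω, Kr ω = sInf {n | 1 ≤ n ∧ Ys ω ≤ D n ω}) :
    ∫⁻ ω, ENNReal.ofReal ((C (Kr ω) ω) ^ 2) ∂μ
      ≤ (∫⁻ ω, ENNReal.ofReal ((C 1 ω) ^ 2) ∂μ) * ∫⁻ ω, (Kr ω : ℝ≥0∞) ∂μ :=
  stmt6_general μ C Ys hCmeas hYsmeas hCpos hCiid hCindep hindep hC2 D hD Kr hKr
end

section
/- For a renewal process N_t with i.i.d. interarrival times X_n satisfying P(X=0)<1 and E[X]<\infty, N_t/t converges almost surely to 1/E[X] as t \to \infty. -/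
/-!
Almost surely `T n / n → E[X]` by the strong law of large numbers, and `E[X] > 0` because `X` is
nonnegative and not almost surely zero. The rest is deterministic: `N t` is sandwiched by
`T (N t) ≤ t < T (N t + 1)`, and `N t → ∞`, so `t / N t → E[X]` by squeezing.
-/

open MeasureTheory ProbabilityTheory Filter Set
open scoped Topology

lemma integral_pos_of_ae_nonneg_of_measure_setOf_eq_zero_lt {α : Type*} [MeasurableSpace α]
    {μ : Measure α} {f : α → ℝ} (hf : 0 ≤ᵐ[μ] f) (hfi : Integrable f μ)
    (hzero : μ {x | f x = 0} < μ univ) : 0 < ∫ x, f x ∂μ := by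
  rw [integral_pos_iff_support_of_nonneg_ae hf hfi, pos_iff_ne_zero]
  intro hsupp
  have hcompl : {x | f x = 0}ᶜ = Function.support f := by
    ext x
    simp [Function.mem_support]
  have := measure_univ_le_add_compl (μ := μ) {x | f x = 0}
  rw [hcompl, hsupp, add_zero] at this
  exact hzero.not_ge this

/-- `N t = sup {n | a n ≤ t}`; it is `0` when this set of naturals is empty or unbounded. -/
noncomputable def renewalCount (a : ℕ → ℝ) (t : ℝ) : ℕ := sSup {n | a n ≤ t}

section Deterministic

variable {a : ℕ → ℝ} {m : ℝ}

lemma tendsto_atTop_of_tendsto_div_natCast (hm : 0 < m)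
    (ha : Tendsto (fun n : ℕ => a n / n) atTop (𝓝 m)) : Tendsto a atTop atTop := by
  have hlin : Tendsto (fun n : ℕ => m / 2 * n) atTop atTop :=
    tendsto_natCast_atTop_atTop.const_mul_atTop (by linarith)
  refine tendsto_atTop_mono' _ ?_ hlin
  filter_upwards [ha.eventually (eventually_ge_nhds (by linarith : m / 2 < m)),
    eventually_gt_atTop 0] with n hn hn0
  rwa [le_div_iff₀ (by exact_mod_cast hn0)] at hn

lemma tendsto_succ_div_natCast (ha : Tendsto (fun n : ℕ => a n / n) atTop (𝓝 m)) :
    Tendsto (fun n : ℕ => a (n + 1) / n) atTop (𝓝 m) := by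
  have hshift : Tendsto (fun n : ℕ => a (n + 1) / ((n : ℝ) + 1)) atTop (𝓝 m) := by
    simpa using (tendsto_add_atTop_iff_nat 1).2 ha
  have := hshift.div (tendsto_natCast_div_add_atTop (1 : ℝ)) one_ne_zero
  rw [div_one] at this
  refine this.congr fun n => ?_
  rw [Pi.div_apply, div_div_div_cancel_right₀ (by positivity)]

namespace renewalCount

variable (ha : Tendsto a atTop atTop)
include ha

lemma bddAbove (t : ℝ) : BddAbove {n | a n ≤ t} := by
  obtain ⟨K, hK⟩ := (ha.eventually_gt_atTop t).exists_forall_of_atTop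
  exact ⟨K, fun n hn => not_lt.1 fun hKn => (hK n hKn.le).not_ge hn⟩

lemma le_of_apply_le {n : ℕ} {t : ℝ} (hn : a n ≤ t) : n ≤ renewalCount a t :=
  le_csSup (bddAbove ha t) hn

lemma apply_le {t : ℝ} (ht : a 0 ≤ t) : a (renewalCount a t) ≤ t :=
  Nat.sSup_mem ⟨0, ht⟩ (bddAbove ha t)

lemma lt_apply_succ (t : ℝ) : t < a (renewalCount a t + 1) :=
  not_le.1 fun h => (le_of_apply_le ha h).not_gt (Nat.lt_succ_self _)

lemma tendsto_atTop : Tendsto (renewalCount a) atTop atTop :=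
  _root_.Filter.tendsto_atTop.2 fun n => (eventually_ge_atTop (a n)).mono fun _ => le_of_apply_le ha

end renewalCount

theorem tendsto_renewalCount_div (hm : 0 < m)
    (ha : Tendsto (fun n : ℕ => a n / n) atTop (𝓝 m)) :
    Tendsto (fun t => (renewalCount a t : ℝ) / t) atTop (𝓝 (1 / m)) := by
  have ha_top := tendsto_atTop_of_tendsto_div_natCast hm ha
  have hN := renewalCount.tendsto_atTop ha_top
  have hlower := ha.comp hN
  have hupper := (tendsto_succ_div_natCast ha).comp hN
  have hsandwich : ∀ᶠ t in atTop, 0 < (renewalCount a t : ℝ) ∧ a 0 ≤ t :=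
    ((hN.eventually_gt_atTop 0).mono fun _ => Nat.cast_pos.2).and (eventually_ge_atTop (a 0))
  have hratio : Tendsto (fun t => t / renewalCount a t) atTop (𝓝 m) := by
    refine tendsto_of_tendsto_of_tendsto_of_le_of_le' hlower hupper ?_ ?_
    · filter_upwards [hsandwich] with t ⟨hpos, ht⟩
      exact div_le_div_of_nonneg_right (renewalCount.apply_le ha_top ht) hpos.le
    · filter_upwards [hsandwich] with t ⟨hpos, _⟩
      exact div_le_div_of_nonneg_right (renewalCount.lt_apply_succ ha_top t).le hpos.le
  simpa [one_div, inv_div] using hratio.inv₀ hm.ne'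

end Deterministic

theorem stmt9_general {Ω : Type*} [MeasurableSpace Ω] (μ : Measure Ω) [IsProbabilityMeasure μ]
    (X : ℕ → Ω → ℝ)
    (hXnonneg : ∀ i, ∀ᵐ ω ∂μ, 0 ≤ X i ω)
    (hXiid : ∀ i j, IdentDistrib (X i) (X j) μ μ)
    (hXindep : iIndepFun X μ)
    (hX0 : μ {ω | X 0 ω = 0} < 1)
    (hXint : Integrable (X 0) μ)
    (T : ℕ → Ω → ℝ) (hT : ∀ n ω, T n ω = ∑ i ∈ Finset.range n, X i ω)
    (N : ℝ → Ω → ℕ) (hN : ∀ t ω, N t ω = sSup {n | T n ω ≤ t}) :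
    ∀ᵐ ω ∂μ, Tendsto (fun t : ℝ => (N t ω : ℝ) / t) atTop
      (nhds (1 / ∫ ω, X 0 ω ∂μ)) := by
  have hmean : 0 < ∫ ω, X 0 ω ∂μ :=
    integral_pos_of_ae_nonneg_of_measure_setOf_eq_zero_lt (hXnonneg 0) hXint (by simpa using hX0)
  have hslln := strong_law_ae_real X hXint
    (fun i j hij => hXindep.indepFun hij) (fun i => hXiid i 0)
  filter_upwards [hslln] with ω hω
  have hT_div : Tendsto (fun n : ℕ => T n ω / n) atTop (𝓝 (∫ ω, X 0 ω ∂μ)) := by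
    simpa [hT] using hω
  simpa [hN, renewalCount] using tendsto_renewalCount_div hmean hT_div

/-- Strong law for renewal processes: `N_t / t → 1 / E[X]` almost surely as `t → ∞`. -/
theorem stmt9 {Ω : Type*} [MeasurableSpace Ω] (μ : Measure Ω) [IsProbabilityMeasure μ]
    (X : ℕ → Ω → ℝ)
    (hXmeas : ∀ i, Measurable (X i)) (hXnonneg : ∀ i, ∀ᵐ ω ∂μ, 0 ≤ X i ω)
    (hXiid : ∀ i j, IdentDistrib (X i) (X j) μ μ)
    (hXindep : iIndepFun X μ)
    (hX0 : μ {ω | X 0 ω = 0} < 1)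
    (hXint : Integrable (X 0) μ)
    (T : ℕ → Ω → ℝ) (hT : ∀ n ω, T n ω = ∑ i ∈ Finset.range n, X i ω)
    (N : ℝ → Ω → ℕ) (hN : ∀ t ω, N t ω = sSup {n | T n ω ≤ t}) :
    ∀ᵐ ω ∂μ, Tendsto (fun t : ℝ => (N t ω : ℝ) / t) atTop
      (nhds (1 / ∫ ω, X 0 ω ∂μ)) :=
  stmt9_general μ X hXnonneg hXiid hXindep hX0 hXint T hT N hN
end

section
/- If Y^s follows the Gamma law \Gamma(n,\mu) (integer shape n, rate \mu) and the i.i.d. inspection gaps C_i have Laplace transform L, then E[K^r] = \sum_{i=0}^{n-1} (\mu^i/i!) (-1)^i (1/(1-L))^{(i)}(\mu), where (1/(1-L))^{(i)} denotes the i-th derivative. -/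
open MeasureTheory ProbabilityTheory Filter Set
open scoped ENNReal Topology

/-!
Since `D` is nondecreasing, `K^r > k` exactly when `D_k < Y^s`, so by independence
`E[K^r] = ∑_k P(D_k < Y^s) = ∫ R_s dν` for the renewal measure `ν = ∑_k law(D_k)`.
The Laplace transform of `ν` is `∑_k L^k = 1/(1-L)` on `(0, ∞)`, and `R_s` is a finite
combination of `t^i e^{-μ t}`, whose `ν`-integrals are the derivatives of that transform.
The resulting expectation is finite, which in turn shows that `K^r` is almost surely attained.
-/

noncomputable def poissonWeight (r t : ℝ) (i : ℕ) : ℝ :=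
  (r * t) ^ i * Real.exp (-(r * t)) / i.factorial

/-- The `R_s` of the paper: the survival function of `Γ(n, r)`, but only for `t ≥ 0`. -/
noncomputable def gammaSurvival (r : ℝ) (n : ℕ) (t : ℝ) : ℝ :=
  ∑ i ∈ Finset.range n, poissonWeight r t i

section GammaTail

variable {r : ℝ}

lemma poissonWeight_nonneg {t : ℝ} (h : 0 ≤ r * t) (i : ℕ) : 0 ≤ poissonWeight r t i := by
  unfold poissonWeight; positivity

lemma gammaSurvival_nonneg (hr : 0 ≤ r) (n : ℕ) {t : ℝ} (ht : 0 ≤ t) :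
    0 ≤ gammaSurvival r n t :=
  Finset.sum_nonneg fun i _ => poissonWeight_nonneg (mul_nonneg hr ht) i

lemma hasDerivAt_exp_neg_mul (r t : ℝ) :
    HasDerivAt (fun t => Real.exp (-(r * t))) (-r * Real.exp (-(r * t))) t := by
  simpa [mul_comm] using (((hasDerivAt_id t).const_mul r).neg).exp

lemma hasDerivAt_poissonWeight_zero (r t : ℝ) :
    HasDerivAt (fun t => poissonWeight r t 0) (-(r * poissonWeight r t 0)) t := by
  simpa [poissonWeight] using hasDerivAt_exp_neg_mul r t

lemma hasDerivAt_poissonWeight_succ (r t : ℝ) (i : ℕ) :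
    HasDerivAt (fun t => poissonWeight r t (i + 1))
      (r * poissonWeight r t i - r * poissonWeight r t (i + 1)) t := by
  have hpow : HasDerivAt (fun t => (r * t) ^ (i + 1)) ((i + 1 : ℕ) * (r * t) ^ i * r) t := by
    simpa using ((hasDerivAt_id t).const_mul r).fun_pow (i + 1)
  refine ((hpow.mul (hasDerivAt_exp_neg_mul r t)).div_const _).congr_deriv ?_
  simp only [poissonWeight, Nat.factorial_succ, Nat.cast_mul]
  field_simp
  ring

lemma hasDerivAt_gammaSurvival_succ (r t : ℝ) (m : ℕ) :
    HasDerivAt (gammaSurvival r (m + 1)) (-(r * poissonWeight r t m)) t := by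
  induction m with
  | zero =>
    show HasDerivAt (fun t => ∑ i ∈ Finset.range 1, poissonWeight r t i) _ t
    simpa using hasDerivAt_poissonWeight_zero r t
  | succ m ih =>
    have h := ih.add (hasDerivAt_poissonWeight_succ r t m)
    rw [show gammaSurvival r (m + 1 + 1) = fun t =>
      gammaSurvival r (m + 1) t + poissonWeight r t (m + 1) from
        funext fun t => Finset.sum_range_succ _ _]
    exact h.congr_deriv (by ring)

lemma tendsto_gammaSurvival_atTop (hr : 0 < r) (n : ℕ) :
    Tendsto (gammaSurvival r n) atTop (𝓝 0) := by
  have hweight (i : ℕ) : Tendsto (fun t => poissonWeight r t i) atTop (𝓝 0) := by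
    simpa [poissonWeight] using ((Real.tendsto_pow_mul_exp_neg_atTop_nhds_zero i).comp
      (tendsto_id.const_mul_atTop hr)).div_const (i.factorial : ℝ)
  unfold gammaSurvival
  simpa only [Finset.sum_const_zero] using tendsto_finsetSum (Finset.range n) fun i _ => hweight i

lemma gammaPDFReal_natCast_succ (m : ℕ) {x : ℝ} (hx : 0 ≤ x) :
    gammaPDFReal (m + 1 : ℕ) r x = r * poissonWeight r x m := by
  rw [gammaPDFReal, if_pos hx, poissonWeight, Real.rpow_natCast, Nat.cast_succ,
    add_sub_cancel_right, Real.rpow_natCast, Real.Gamma_nat_eq_factorial]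
  ring

lemma gammaMeasure_Ioi (hr : 0 < r) (m : ℕ) {t : ℝ} (ht : 0 ≤ t) :
    gammaMeasure (m + 1 : ℕ) r (Ioi t) = ENNReal.ofReal (gammaSurvival r (m + 1) t) := by
  have hderiv (x : ℝ) : HasDerivAt (fun y => -gammaSurvival r (m + 1) y)
      (r * poissonWeight r x m) x := by
    simpa using (hasDerivAt_gammaSurvival_succ r x m).fun_neg
  have hnonneg (x : ℝ) (hx : x ∈ Ioi t) : 0 ≤ r * poissonWeight r x m :=
    mul_nonneg hr.le (poissonWeight_nonneg (by nlinarith [mem_Ioi.1 hx]) m)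
  have htendsto : Tendsto (fun y => -gammaSurvival r (m + 1) y) atTop (𝓝 0) := by
    simpa using (tendsto_gammaSurvival_atTop hr (m + 1)).neg
  have hint : IntegrableOn (fun x => r * poissonWeight r x m) (Ioi t) :=
    integrableOn_Ioi_deriv_of_nonneg (hderiv t).continuousAt.continuousWithinAt
      (fun x _ => hderiv x) hnonneg htendsto
  rw [gammaMeasure, withDensity_apply _ measurableSet_Ioi,
    setLIntegral_congr_fun measurableSet_Ioi fun x hx => by
      rw [gammaPDF, gammaPDFReal_natCast_succ m (ht.trans (mem_Ioi.1 hx).le)],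
    ← ofReal_integral_eq_lintegral_ofReal hint
      ((ae_restrict_iff' measurableSet_Ioi).2 (ae_of_all _ hnonneg)),
    integral_Ioi_of_hasDerivAt_of_tendsto' (fun x _ => hderiv x) hint htendsto]
  simp

lemma ae_pos_gammaMeasure (hr : 0 < r) (m : ℕ) : ∀ᵐ x ∂gammaMeasure (m + 1 : ℕ) r, 0 < x := by
  have := isProbabilityMeasure_gammaMeasure (a := (m + 1 : ℕ)) (by positivity) hr
  refine mem_ae_iff.2 ((prob_compl_eq_zero_iff measurableSet_Ioi).2 ?_)
  rw [gammaMeasure_Ioi hr m le_rfl]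
  simp [gammaSurvival, poissonWeight, Finset.sum_range_succ']

end GammaTail

section Renewal

variable {Ω : Type*} [MeasurableSpace Ω] {μ : Measure Ω}

lemma ProbabilityTheory.IndepFun.measure_lt_eq_lintegral [IsFiniteMeasure μ] {X Y : Ω → ℝ}
    (hX : Measurable X) (hY : Measurable Y) (h : IndepFun X Y μ) :
    μ {ω | X ω < Y ω} = ∫⁻ x, μ.map Y (Ioi x) ∂μ.map X := by
  have hs : MeasurableSet {p : ℝ × ℝ | p.1 < p.2} :=
    measurableSet_lt measurable_fst measurable_snd
  rw [show μ {ω | X ω < Y ω} = μ.map (fun ω => (X ω, Y ω)) {p | p.1 < p.2} from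
      (Measure.map_apply (hX.prodMk hY) hs).symm,
    h.map_prod_eq_prod_map_map hX.aemeasurable hY.aemeasurable, Measure.prod_apply hs]
  rfl

lemma integrable_exp_mul_of_nonpos [IsFiniteMeasure μ] {X : Ω → ℝ} (hX : AEMeasurable X μ)
    (hX_nonneg : ∀ᵐ ω ∂μ, 0 ≤ X ω) {t : ℝ} (ht : t ≤ 0) :
    Integrable (fun ω => Real.exp (t * X ω)) μ := by
  refine Integrable.of_bound (hX.const_mul t).exp.aestronglyMeasurable 1 ?_
  filter_upwards [hX_nonneg] with ω hω
  rw [Real.norm_eq_abs, Real.abs_exp, Real.exp_le_one_iff]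
  exact mul_nonpos_of_nonpos_of_nonneg ht hω

lemma mgf_lt_one_of_neg [IsProbabilityMeasure μ] {X : Ω → ℝ} (hX : AEMeasurable X μ)
    (hX_pos : ∀ᵐ ω ∂μ, 0 < X ω) {t : ℝ} (ht : t < 0) : mgf X μ t < 1 := by
  have hint := integrable_exp_mul_of_nonpos hX (hX_pos.mono fun _ h => h.le) ht.le
  have hle : (fun ω => Real.exp (t * X ω)) ≤ᵐ[μ] fun _ => 1 := by
    filter_upwards [hX_pos] with ω hω
    exact Real.exp_le_one_iff.2 (mul_nonpos_of_nonpos_of_nonneg ht.le hω.le)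
  have hle_one : mgf X μ t ≤ 1 := by
    simpa [mgf] using integral_mono_ae hint (integrable_const 1) hle
  refine hle_one.lt_of_ne fun heq => ?_
  have hae := (integral_eq_iff_of_ae_le hint (integrable_const 1) hle).1
    (by simpa [mgf] using heq)
  obtain ⟨ω, hω1, hω0⟩ := (hae.and hX_pos).exists
  exact (Real.exp_lt_one_iff.2 (mul_neg_of_neg_of_pos ht hω0)).ne hω1

lemma mgf_sum_range_eq_pow {C : ℕ → Ω → ℝ} (hmeas : ∀ i, Measurable (C i))
    (hindep : iIndepFun C μ) (hiid : ∀ i, IdentDistrib (C i) (C 0) μ μ) (k : ℕ) (t : ℝ) :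
    mgf (fun ω => ∑ i ∈ Finset.range k, C i ω) μ t = mgf (C 0) μ t ^ k := by
  simp_rw [← Finset.sum_apply, hindep.mgf_sum hmeas, mgf_congr_identDistrib (hiid _),
    Finset.prod_const, Finset.card_range]

noncomputable def renewalMeasure (μ : Measure Ω) (D : ℕ → Ω → ℝ) : Measure ℝ :=
  Measure.sum fun k => μ.map (D k)

lemma ae_nonneg_renewalMeasure {D : ℕ → Ω → ℝ} (hD : ∀ k, Measurable (D k))
    (hD_nonneg : ∀ k, ∀ᵐ ω ∂μ, 0 ≤ D k ω) : ∀ᵐ x ∂renewalMeasure μ D, 0 ≤ x :=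
  Measure.ae_sum_iff.2 fun k => (ae_map_iff (hD k).aemeasurable measurableSet_Ici).2 (hD_nonneg k)

lemma lintegral_tsum_indicator_lt [IsFiniteMeasure μ] {D : ℕ → Ω → ℝ} {Y : Ω → ℝ}
    (hD : ∀ k, Measurable (D k)) (hY : Measurable Y) (hindep : ∀ k, IndepFun (D k) Y μ) :
    ∫⁻ ω, ∑' k, {ω | D k ω < Y ω}.indicator 1 ω ∂μ
      = ∫⁻ x, μ.map Y (Ioi x) ∂renewalMeasure μ D := by
  have hmeas (k : ℕ) : MeasurableSet {ω | D k ω < Y ω} := measurableSet_lt (hD k) hY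
  rw [lintegral_tsum fun k => (measurable_one.indicator (hmeas k)).aemeasurable, renewalMeasure,
    lintegral_sum_measure]
  exact tsum_congr fun k => by
    rw [lintegral_indicator_one (hmeas k), (hindep k).measure_lt_eq_lintegral (hD k) hY]

variable [IsProbabilityMeasure μ] {C : ℕ → Ω → ℝ}

lemma mem_integrableExpSet_renewalMeasure (hmeas : ∀ i, Measurable (C i))
    (hindep : iIndepFun C μ) (hiid : ∀ i, IdentDistrib (C i) (C 0) μ μ) {t : ℝ}
    (hint : Integrable (fun ω => Real.exp (t * C 0 ω)) μ) (hlt : mgf (C 0) μ t < 1) :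
    t ∈ integrableExpSet id (renewalMeasure μ fun k ω => ∑ i ∈ Finset.range k, C i ω) := by
  have hpos : 0 < mgf (C 0) μ t := mgf_pos' (IsProbabilityMeasure.ne_zero μ) hint
  have hDmeas (k : ℕ) : Measurable fun ω => ∑ i ∈ Finset.range k, C i ω :=
    Finset.measurable_sum _ fun i _ => hmeas i
  have hint_map (k : ℕ) : Integrable (fun x => Real.exp (t * id x))
      (μ.map fun ω => ∑ i ∈ Finset.range k, C i ω) := by
    have := Measure.isProbabilityMeasure_map (μ := μ) (hDmeas k).aemeasurable
    rw [← mgf_pos_iff, mgf_id_map (hDmeas k).aemeasurable, mgf_sum_range_eq_pow hmeas hindep hiid]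
    positivity
  refine integrable_sum_measure hint_map ?_
  simp_rw [Real.norm_eq_abs, Real.abs_exp]
  refine (summable_geometric_of_lt_one hpos.le hlt).congr fun k => ?_
  rw [← mgf_sum_range_eq_pow hmeas hindep hiid, ← mgf_id_map (hDmeas k).aemeasurable]
  rfl

lemma mgf_renewalMeasure (hmeas : ∀ i, Measurable (C i))
    (hindep : iIndepFun C μ) (hiid : ∀ i, IdentDistrib (C i) (C 0) μ μ) {t : ℝ}
    (hint : Integrable (fun ω => Real.exp (t * C 0 ω)) μ) (hlt : mgf (C 0) μ t < 1) :
    mgf id (renewalMeasure μ fun k ω => ∑ i ∈ Finset.range k, C i ω) t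
      = (1 - mgf (C 0) μ t)⁻¹ := by
  rw [renewalMeasure,
    mgf_sum_measure (mem_integrableExpSet_renewalMeasure hmeas hindep hiid hint hlt)]
  simp_rw [mgf_id_map (Finset.measurable_sum _ fun i _ => hmeas i).aemeasurable,
    mgf_sum_range_eq_pow hmeas hindep hiid]
  exact tsum_geometric_of_lt_one mgf_nonneg hlt

end Renewal

section Laplace

variable {ν : Measure ℝ} {g : ℝ → ℝ} {r : ℝ}

lemma neg_mem_interior_integrableExpSet (hν : Iio 0 ⊆ integrableExpSet id ν) (hr : 0 < r) :
    -r ∈ interior (integrableExpSet id ν) :=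
  interior_mono hν (by rwa [interior_Iio, mem_Iio, neg_lt_zero])

lemma iteratedDeriv_eq_integral_of_eqOn_mgf_neg (hν : Iio 0 ⊆ integrableExpSet id ν)
    (hg : EqOn g (fun s => mgf id ν (-s)) (Ioi 0)) (hr : 0 < r) (i : ℕ) :
    iteratedDeriv i g r = (-1) ^ i * ∫ x, x ^ i * Real.exp (-r * x) ∂ν := by
  rw [(hg.eventuallyEq_of_mem (Ioi_mem_nhds hr)).iteratedDeriv_eq, iteratedDeriv_comp_neg,
    iteratedDeriv_mgf (neg_mem_interior_integrableExpSet hν hr), smul_eq_mul]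
  rfl

lemma integrable_poissonWeight (hν : Iio 0 ⊆ integrableExpSet id ν) (hr : 0 < r) (i : ℕ) :
    Integrable (fun x => poissonWeight r x i) ν := by
  refine ((integrable_pow_mul_exp_of_mem_interior_integrableExpSet
    (neg_mem_interior_integrableExpSet hν hr) i).const_mul (r ^ i / i.factorial)).congr
    (ae_of_all _ fun x => ?_)
  simp only [poissonWeight, id, mul_pow, neg_mul]
  ring

lemma integrable_gammaSurvival (hν : Iio 0 ⊆ integrableExpSet id ν) (hr : 0 < r) (n : ℕ) :
    Integrable (gammaSurvival r n) ν :=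
  integrable_finsetSum _ fun i _ => integrable_poissonWeight hν hr i

lemma sum_iteratedDeriv_eq_integral_gammaSurvival (hν : Iio 0 ⊆ integrableExpSet id ν)
    (hg : EqOn g (fun s => mgf id ν (-s)) (Ioi 0)) (hr : 0 < r) (n : ℕ) :
    ∑ i ∈ Finset.range n, r ^ i / i.factorial * (-1) ^ i * iteratedDeriv i g r
      = ∫ x, gammaSurvival r n x ∂ν := by
  simp_rw [gammaSurvival]
  rw [integral_finsetSum _ fun i _ => integrable_poissonWeight hν hr i]
  refine Finset.sum_congr rfl fun i _ => ?_
  rw [iteratedDeriv_eq_integral_of_eqOn_mgf_neg hν hg hr, ← mul_assoc, ← integral_const_mul]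
  refine integral_congr_ae (ae_of_all _ fun x => ?_)
  have hsign : ((-1 : ℝ) ^ i) * (-1) ^ i = 1 := by rw [← mul_pow]; norm_num
  simp only [poissonWeight, neg_mul]
  linear_combination (r ^ i / i.factorial * (x ^ i * Real.exp (-(r * x)))) * hsign

end Laplace

lemma lintegral_tsum_indicator_lt_eq_sum_iteratedDeriv {Ω : Type*} [MeasurableSpace Ω]
    {μ : Measure Ω} [IsProbabilityMeasure μ] {C : ℕ → Ω → ℝ} {D : ℕ → Ω → ℝ} {Y : Ω → ℝ}
    {r : ℝ} (hr : 0 < r) (m : ℕ) (hCmeas : ∀ i, Measurable (C i)) (hY : Measurable Y)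
    (hCpos : ∀ i, ∀ᵐ ω ∂μ, 0 < C i ω) (hiid : ∀ i, IdentDistrib (C i) (C 0) μ μ)
    (hCindep : iIndepFun C μ) (hindep : IndepFun (fun ω i => C i ω) Y μ)
    (hYlaw : μ.map Y = gammaMeasure (m + 1 : ℕ) r)
    (hD : ∀ k ω, D k ω = ∑ i ∈ Finset.range k, C i ω) :
    ∫⁻ ω, ∑' k, {ω | D k ω < Y ω}.indicator 1 ω ∂μ
      = ENNReal.ofReal (∑ i ∈ Finset.range (m + 1), r ^ i / i.factorial * (-1) ^ i
          * iteratedDeriv i (fun s => (1 - mgf (C 0) μ (-s))⁻¹) r) := by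
  have hDeq : D = fun k ω => ∑ i ∈ Finset.range k, C i ω := funext₂ hD
  have hDmeas (k : ℕ) : Measurable (D k) := hDeq ▸ Finset.measurable_sum _ fun i _ => hCmeas i
  have hDnonneg (k : ℕ) : ∀ᵐ ω ∂μ, 0 ≤ D k ω := (ae_all_iff.2 hCpos).mono fun ω hω =>
    hD k ω ▸ Finset.sum_nonneg fun i _ => (hω i).le
  have hC0 {t : ℝ} (ht : t < 0) :
      Integrable (fun ω => Real.exp (t * C 0 ω)) μ ∧ mgf (C 0) μ t < 1 :=
    ⟨integrable_exp_mul_of_nonpos (hCmeas 0).aemeasurable ((hCpos 0).mono fun _ h => h.le) ht.le,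
      mgf_lt_one_of_neg (hCmeas 0).aemeasurable (hCpos 0) ht⟩
  have hν : Iio 0 ⊆ integrableExpSet id (renewalMeasure μ D) := fun t ht =>
    hDeq ▸ mem_integrableExpSet_renewalMeasure hCmeas hCindep hiid (hC0 ht).1 (hC0 ht).2
  have hg : EqOn (fun s => (1 - mgf (C 0) μ (-s))⁻¹) (fun s => mgf id (renewalMeasure μ D) (-s))
      (Ioi 0) := fun s hs => by
    have hs' : -s < 0 := neg_lt_zero.2 hs
    simp only [hDeq, mgf_renewalMeasure hCmeas hCindep hiid (hC0 hs').1 (hC0 hs').2]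
  have hνnonneg := ae_nonneg_renewalMeasure hDmeas hDnonneg
  rw [lintegral_tsum_indicator_lt hDmeas hY fun k => hDeq ▸
      hindep.comp (Finset.measurable_sum _ fun i _ => measurable_pi_apply i) measurable_id,
    hYlaw, sum_iteratedDeriv_eq_integral_gammaSurvival hν hg hr,
    ofReal_integral_eq_lintegral_ofReal (integrable_gammaSurvival hν hr _)
      (hνnonneg.mono fun x hx => gammaSurvival_nonneg hr.le _ hx)]
  exact lintegral_congr_ae (hνnonneg.mono fun x hx => gammaMeasure_Ioi hr m hx)

lemma ae_exists_notMem_of_lintegral_tsum_indicator_ne_top {Ω : Type*} [MeasurableSpace Ω]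
    {μ : Measure Ω} {A : ℕ → Set Ω} (hA : ∀ k, MeasurableSet (A k))
    (h : ∫⁻ ω, ∑' k, (A k).indicator 1 ω ∂μ ≠ ∞) : ∀ᵐ ω ∂μ, ∃ k, ω ∉ A k := by
  filter_upwards [ae_lt_top (Measurable.tsum fun k => measurable_one.indicator (hA k)) h]
    with ω hω
  by_contra! hmem
  simp [indicator_of_mem, hmem] at hω

lemma sInf_eq_tsum_ite_lt {d : ℕ → ℝ} (hd : Monotone d) {y : ℝ} (h0 : d 0 < y)
    (hex : ∃ k, y ≤ d k) :
    ((sInf {k | 1 ≤ k ∧ y ≤ d k} : ℕ) : ℝ≥0∞) = ∑' k, if d k < y then 1 else 0 := by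
  have hpos {k : ℕ} (hk : y ≤ d k) : 1 ≤ k :=
    Nat.one_le_iff_ne_zero.2 fun hk0 => (h0.trans_le (hk0 ▸ hk)).false
  set K := sInf {k | 1 ≤ k ∧ y ≤ d k}
  have hK : y ≤ d K :=
    (Nat.sInf_mem (s := {k | 1 ≤ k ∧ y ≤ d k}) (hex.imp fun k hk => ⟨hpos hk, hk⟩)).2
  have hlt (k : ℕ) : d k < y ↔ k < K := by
    refine ⟨fun hk => not_le.1 fun hKk => (hk.trans_le (hK.trans (hd hKk))).false,
      fun hk => not_le.1 fun hyk =>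
        not_lt.2 (Nat.sInf_le (s := {k | 1 ≤ k ∧ y ≤ d k}) ⟨hpos hyk, hyk⟩) hk⟩
  simp_rw [hlt]
  rw [tsum_eq_sum (s := Finset.range K) fun k hk => if_neg (by simpa using hk), Finset.sum_boole,
    Finset.filter_true_of_mem fun k hk => Finset.mem_range.1 hk, Finset.card_range]

/-- If `Y^s ~ Γ(n, μ)` (integer shape `n`, rate `μ`) and the i.i.d. gaps `C_i` have Laplace
transform `L`, then `E[K^r] = ∑_{i=0}^{n-1} (μ^i / i!) (-1)^i (1/(1-L))^{(i)}(μ)`. -/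
theorem stmt15 {Ω : Type*} [MeasurableSpace Ω] (μ : Measure Ω) [IsProbabilityMeasure μ]
    (C : ℕ → Ω → ℝ) (Ys : Ω → ℝ) (n : ℕ) (hn : 1 ≤ n) (μ0 : ℝ) (hμ0 : 0 < μ0)
    (hCmeas : ∀ i, Measurable (C i)) (hYsmeas : Measurable Ys)
    (hCpos : ∀ i, ∀ᵐ ω ∂μ, 0 < C i ω)
    (hCiid : ∀ i j, IdentDistrib (C i) (C j) μ μ)
    (hCindep : iIndepFun C μ)
    (hindep : IndepFun (fun ω => fun i => C i ω) Ys μ)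
    (hYs : μ.map Ys = gammaMeasure n μ0)
    (D : ℕ → Ω → ℝ) (hD : ∀ k ω, D k ω = ∑ i ∈ Finset.range k, C i ω)
    (Kr : Ω → ℕ) (hKr : ∀ ω, Kr ω = sInf {k | 1 ≤ k ∧ Ys ω ≤ D k ω})
    (L : ℝ → ℝ) (hL : ∀ s, L s = ∫ ω, Real.exp (-s * C 0 ω) ∂μ) :
    ∫⁻ ω, (Kr ω : ℝ≥0∞) ∂μ
      = ENNReal.ofReal (∑ i ∈ Finset.range n,
          μ0 ^ i / (Nat.factorial i) * (-1 : ℝ) ^ i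
            * iteratedDeriv i (fun s => (1 - L s)⁻¹) μ0) := by
  obtain ⟨m, rfl⟩ : ∃ m, n = m + 1 := ⟨n - 1, by omega⟩
  obtain rfl : L = fun s => mgf (C 0) μ (-s) := funext hL
  have hexpect := lintegral_tsum_indicator_lt_eq_sum_iteratedDeriv hμ0 m hCmeas hYsmeas hCpos
    (fun i => hCiid i 0) hCindep hindep hYs hD
  have hDmeas (k : ℕ) : Measurable (D k) :=
    funext (hD k) ▸ Finset.measurable_sum _ fun i _ => hCmeas i
  have hreach := ae_exists_notMem_of_lintegral_tsum_indicator_ne_top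
    (fun k => measurableSet_lt (hDmeas k) hYsmeas) (hexpect ▸ ENNReal.ofReal_ne_top)
  rw [← hexpect]
  refine lintegral_congr_ae ?_
  have hYpos : ∀ᵐ ω ∂μ, 0 < Ys ω :=
    ae_of_ae_map hYsmeas.aemeasurable (hYs ▸ ae_pos_gammaMeasure hμ0 m)
  filter_upwards [ae_all_iff.2 hCpos, hYpos, hreach] with ω hC hY hk
  simp only [hKr, indicator_apply, mem_ofPred_eq, Pi.one_apply]
  refine sInf_eq_tsum_ite_lt ?_ (by simpa [hD] using hY) (by simpa using hk)
  rw [funext₂ hD]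
  exact (Finset.sum_mono_set_of_nonneg fun i => (hC i).le).comp Finset.range_mono
end
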